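/- arXiv:0905.3573 — 6 statements merged into one kernel-verified Lean document; each statement's English description precedes it below -/
import Mathlib

section
/- For a > 0 and λ > 0, the function t ↦ t + λρ_a'(t) on (0,∞) attains infimum over [0,∞) at t = 0 (i.e., inf_{t>0} (t + λ a(a+1)/(a+t)²) ≥ λρ_a'(0+) = λ(1+a⁻¹)) if and only if a ≥ a₀ := λ + √(λ² + 2λ). -/
/-!
Multiplying by `a (a + t)² / t > 0` turns the inequality at `t` into
`λ (a + 1)(2a + t) ≤ a (a + t)²`. The difference of the two sides grows like
`t (2a² + a t - λ (a + 1))` above its value `a (a² - 2λ (a + 1))` at `t = 0`, so the inequality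
holds for all `t > 0` exactly when `2λ (a + 1) ≤ a²`, i.e. when `a` lies above the larger root
`λ + √(λ² + 2λ)` of `a² - 2λ a - 2λ`.
-/

open Set

lemma add_sqrt_sq_add_two_mul_le_iff {a lam : ℝ} (ha : 0 < a) :
    lam + √(lam ^ 2 + 2 * lam) ≤ a ↔ 2 * lam * (a + 1) ≤ a ^ 2 := by
  rw [← le_sub_iff_add_le', Real.sqrt_le_iff]
  constructor
  · rintro ⟨-, h⟩
    nlinarith
  · intro h
    exact ⟨by nlinarith, by nlinarith⟩

lemma mul_one_add_inv_le_add_mul_div_sq_iff {a t lam : ℝ} (ha : 0 < a) (ht : 0 < t) :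
    lam * (1 + a⁻¹) ≤ t + lam * (a * (a + 1) / (a + t) ^ 2) ↔
      lam * (a + 1) * (2 * a + t) ≤ a * (a + t) ^ 2 := by
  rw [← mul_le_mul_iff_of_pos_right (show 0 < a * (a + t) ^ 2 by positivity),
    ← mul_le_mul_iff_of_pos_left ht]
  constructor <;> intro h
  · field_simp at h
    nlinarith
  · field_simp
    nlinarith

lemma forall_pos_mul_two_mul_add_le_iff {a lam : ℝ} (ha : 0 < a) :
    (∀ t : ℝ, 0 < t → lam * (a + 1) * (2 * a + t) ≤ a * (a + t) ^ 2) ↔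
      2 * lam * (a + 1) ≤ a ^ 2 := by
  constructor
  · intro h
    have hclosed : IsClosed {t : ℝ | lam * (a + 1) * (2 * a + t) ≤ a * (a + t) ^ 2} :=
      isClosed_le (by fun_prop) (by fun_prop)
    have h0 : (0 : ℝ) ∈ {t : ℝ | lam * (a + 1) * (2 * a + t) ≤ a * (a + t) ^ 2} :=
      (hclosed.closure_subset_iff (s := Ioi 0)).mpr h (by rw [closure_Ioi]; exact self_mem_Ici)
    simp only [mem_ofPred_eq, add_zero] at h0
    nlinarith
  · intro h t ht
    have hslope : 0 ≤ 2 * a ^ 2 + a * t - lam * (a + 1) := by nlinarith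
    nlinarith [mul_nonneg ht.le hslope]

theorem stmt_4_general (a lam : ℝ) (ha : 0 < a) :
    (∀ t : ℝ, 0 < t → lam * (1 + a⁻¹) ≤ t + lam * (a * (a + 1) / (a + t) ^ 2)) ↔
      lam + Real.sqrt (lam ^ 2 + 2 * lam) ≤ a := by
  calc (∀ t : ℝ, 0 < t → lam * (1 + a⁻¹) ≤ t + lam * (a * (a + 1) / (a + t) ^ 2))
      ↔ ∀ t : ℝ, 0 < t → lam * (a + 1) * (2 * a + t) ≤ a * (a + t) ^ 2 :=
        forall₂_congr fun _ ht => mul_one_add_inv_le_add_mul_div_sq_iff ha ht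
    _ ↔ 2 * lam * (a + 1) ≤ a ^ 2 := forall_pos_mul_two_mul_add_le_iff ha
    _ ↔ lam + Real.sqrt (lam ^ 2 + 2 * lam) ≤ a := (add_sqrt_sq_add_two_mul_le_iff ha).symm

/-- For `a, λ > 0`, the function `t ↦ t + λ ρ_a'(t)` on `(0,∞)` stays above its value
`λ ρ_a'(0+) = λ(1 + a⁻¹)` at zero (i.e. the minimum over `[0,∞)` is attained at `t = 0`)
if and only if `a ≥ a₀ = λ + √(λ² + 2λ)`. -/
theorem stmt_4 (a lam : ℝ) (ha : 0 < a) (hlam : 0 < lam) :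
    (∀ t : ℝ, 0 < t → lam * (1 + a⁻¹) ≤ t + lam * (a * (a + 1) / (a + t) ^ 2)) ↔
      lam + Real.sqrt (lam ^ 2 + 2 * lam) ≤ a :=
  stmt_4_general a lam ha
end

section
/- If β and β' both satisfy Xβ = Xβ' = y with ‖β‖₀ < spark(X)/2 and ‖β'‖₀ < spark(X)/2, then β = β'. (Uniqueness of sufficiently sparse solutions characterized by the spark.) -/
open Matrix

/-- The L0 "norm": the number of nonzero coordinates. -/
noncomputable def l0norm {p : ℕ} (β : Fin p → ℝ) : ℕ := (Function.support β).ncard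

/-- The spark of a matrix: the smallest number `τ` such that some `τ` columns of `X`
are linearly dependent; equivalently, the minimal L0 norm of a nonzero null vector
(`⊤` if the columns are linearly independent). -/
noncomputable def spark {n p : ℕ} (X : Matrix (Fin n) (Fin p) ℝ) : ℕ∞ :=
  sInf {k : ℕ∞ | ∃ c : Fin p → ℝ, c ≠ 0 ∧ X.mulVec c = 0 ∧ k = (l0norm c : ℕ∞)}

/-- Uniqueness of sufficiently sparse solutions: if `Xβ = Xβ' = y` and both
`‖β‖₀ < spark(X)/2` and `‖β'‖₀ < spark(X)/2`, then `β = β'`. -/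
theorem stmt_7 {n p : ℕ} (X : Matrix (Fin n) (Fin p) ℝ) (y : Fin n → ℝ)
    (β β' : Fin p → ℝ) (h1 : X.mulVec β = y) (h2 : X.mulVec β' = y)
    (hs1 : 2 * (l0norm β : ℕ∞) < spark X) (hs2 : 2 * (l0norm β' : ℕ∞) < spark X) :
    β = β' := by
  by_contra hne
  set c : Fin p → ℝ := β - β' with hc
  have hcne : c ≠ 0 := sub_ne_zero.mpr hne
  have hXc : X.mulVec c = 0 := by
    rw [hc, Matrix.mulVec_sub, h1, h2, sub_self]
  -- spark X ≤ l0norm c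
  have hspark : spark X ≤ (l0norm c : ℕ∞) :=
    sInf_le ⟨c, hcne, hXc, rfl⟩
  -- l0norm c ≤ l0norm β + l0norm β'
  have hsub : Function.support c ⊆ Function.support β ∪ Function.support β' := by
    intro i hi
    simp only [Function.mem_support, hc, Pi.sub_apply] at hi
    by_contra h
    simp only [Set.mem_union, Function.mem_support, not_or, not_not] at h
    exact hi (by rw [h.1, h.2, sub_self])
  have hfin : (Function.support β ∪ Function.support β').Finite :=
    Set.Finite.union (Set.toFinite _) (Set.toFinite _)
  have hle : l0norm c ≤ l0norm β + l0norm β' := by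
    calc l0norm c ≤ (Function.support β ∪ Function.support β').ncard :=
          Set.ncard_le_ncard hsub hfin
      _ ≤ l0norm β + l0norm β' := Set.ncard_union_le _ _
  have hle' : (l0norm c : ℕ∞) ≤ (l0norm β : ℕ∞) + (l0norm β' : ℕ∞) := by
    exact_mod_cast hle
  have h2s : 2 * spark X ≤ 2 * ((l0norm β : ℕ∞) + (l0norm β' : ℕ∞)) := by
    calc 2 * spark X ≤ 2 * (l0norm c : ℕ∞) := by gcongr
      _ ≤ 2 * ((l0norm β : ℕ∞) + (l0norm β' : ℕ∞)) := by gcongr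
  have hlt : 2 * ((l0norm β : ℕ∞) + (l0norm β' : ℕ∞)) < 2 * spark X := by
    rw [mul_add, two_mul (spark X)]
    calc 2 * (l0norm β : ℕ∞) + 2 * (l0norm β' : ℕ∞)
        < spark X + 2 * (l0norm β' : ℕ∞) := by
          have ht : 2 * (l0norm β' : ℕ∞) ≠ ⊤ := by
            rw [← Nat.cast_ofNat, ← Nat.cast_mul]; exact ENat.coe_ne_top _
          exact (ENat.add_lt_add_iff_right ht).mpr hs1
      _ ≤ spark X + spark X := by gcongr
  exact absurd (lt_of_le_of_lt h2s hlt) (lt_irrefl _)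
end

section
/- Suppose p > n, spark(X) = n + 1, and ‖β₀‖₀ < (n+1)/2, where Xβ₀ = y. Then every β ∈ ℝᵖ with Xβ = y satisfies either β = β₀ or ‖β‖₀ > (n+1)/2. -/
open Matrix

/-- If `p > n`, `spark(X) = n + 1` and `‖β₀‖₀ < (n+1)/2` with `Xβ₀ = y`, then every
solution `β` of `Xβ = y` satisfies either `β = β₀` or `‖β‖₀ > (n+1)/2`. -/
theorem stmt_8 {n p : ℕ} (hnp : n < p) (X : Matrix (Fin n) (Fin p) ℝ) (y : Fin n → ℝ)
    (β₀ : Fin p → ℝ) (hspark : spark X = ((n + 1 : ℕ) : ℕ∞))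
    (h0 : 2 * l0norm β₀ < n + 1) (hy : X.mulVec β₀ = y) :
    ∀ β : Fin p → ℝ, X.mulVec β = y → β = β₀ ∨ n + 1 < 2 * l0norm β := by
  intro β hβ
  by_cases hβ0 : β = β₀
  · exact Or.inl hβ0
  right
  set c : Fin p → ℝ := β - β₀ with hc
  have hcne : c ≠ 0 := sub_ne_zero_of_ne hβ0
  have hXc : X.mulVec c = 0 := by
    rw [hc, Matrix.mulVec_sub, hβ, hy, sub_self]
  -- spark bound: n + 1 ≤ l0norm c
  have hmem : ((l0norm c : ℕ∞)) ∈
      {k : ℕ∞ | ∃ c' : Fin p → ℝ, c' ≠ 0 ∧ X.mulVec c' = 0 ∧ k = (l0norm c' : ℕ∞)} :=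
    ⟨c, hcne, hXc, rfl⟩
  have hle : spark X ≤ (l0norm c : ℕ∞) := sInf_le hmem
  rw [hspark] at hle
  have h1 : n + 1 ≤ l0norm c := by exact_mod_cast hle
  -- subadditivity: l0norm c ≤ l0norm β + l0norm β₀
  have hsub : Function.support c ⊆ Function.support β ∪ Function.support β₀ := by
    intro i hi
    by_contra h
    simp only [Set.mem_union, Function.mem_support, not_or, not_not] at h
    apply hi
    simp [hc, h.1, h.2]
  have hfin : (Function.support β ∪ Function.support β₀).Finite :=
    Set.Finite.union (Set.toFinite _) (Set.toFinite _)
  have h2 : l0norm c ≤ l0norm β + l0norm β₀ := by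
    calc l0norm c ≤ (Function.support β ∪ Function.support β₀).ncard :=
          Set.ncard_le_ncard hsub hfin
      _ ≤ l0norm β + l0norm β₀ := Set.ncard_union_le _ _
  omega
end

section
/- (Example 1 computation.) Assume X_{M₀} has orthonormal columns with M₀ = {1,…,s}, |β₀,₁| = ⋯ = |β₀,ₛ| = b > 0, and x_{s+1} = r s^{−1/2} Σ_{j=1}^s sgn(β₀,ⱼ) x_j + h with h orthogonal to the span of x₁,…,xₛ and r ∈ (−1,1). Then for any ε ∈ (0,b), max_{v ∈ V_ε} |⟨x_{s+1}, X_{M₀} ρ̄_a(v)⟩| = |r|√s · a(a+1)/(a + b − ε)², where ρ̄_a(t) = sgn(t)·a(a+1)/(a+|t|)² applied componentwise and V_ε = ∏_{j=1}^s [β₀,ⱼ−ε, β₀,ⱼ+ε]. -/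
open Matrix

lemma stmt12_dot_sum {n s : ℕ} (u : Fin n → ℝ) (c : Fin s → ℝ) (w : Fin s → Fin n → ℝ) :
    u ⬝ᵥ ∑ j, c j • w j = ∑ j, c j * (u ⬝ᵥ w j) := by
  simp only [dotProduct, Finset.sum_apply, Pi.smul_apply, smul_eq_mul, Finset.mul_sum]
  rw [Finset.sum_comm]
  exact Finset.sum_congr rfl fun j _ => Finset.sum_congr rfl fun i _ => by ring

lemma stmt12_sum_dot {n s : ℕ} (u : Fin n → ℝ) (c : Fin s → ℝ) (w : Fin s → Fin n → ℝ) :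
    (∑ j, c j • w j) ⬝ᵥ u = ∑ j, c j * (w j ⬝ᵥ u) := by
  rw [dotProduct_comm, stmt12_dot_sum]
  exact Finset.sum_congr rfl fun j _ => by rw [dotProduct_comm]

/-- Example 1 computation: if the true columns `x₁,…,xₛ` are orthonormal, all true
coefficients have common magnitude `b`, and
`x_{s+1} = r s^{-1/2} Σⱼ sgn(β₀ⱼ) xⱼ + h` with `h` orthogonal to the `xⱼ`, then for
`0 < ε < b`, `max_{v ∈ V_ε} |⟨x_{s+1}, X_{M₀} ρ̄_a(v)⟩| = |r|√s·a(a+1)/(a+b−ε)²`. -/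
theorem stmt_12 {n s : ℕ} (hs : 0 < s) (a : ℝ) (ha : 0 < a)
    (xcol : Fin s → Fin n → ℝ) (xs1 h : Fin n → ℝ)
    (horth : ∀ i j : Fin s, xcol i ⬝ᵥ xcol j = if i = j then (1 : ℝ) else 0)
    (β₀ : Fin s → ℝ) (b : ℝ) (hb : 0 < b) (hβ : ∀ j, |β₀ j| = b)
    (r : ℝ) (hr : r ∈ Set.Ioo (-1 : ℝ) 1)
    (hherp : ∀ j, h ⬝ᵥ xcol j = 0)
    (hx : xs1 = (r / Real.sqrt s) • (∑ j, Real.sign (β₀ j) • xcol j) + h)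
    (ε : ℝ) (hε : ε ∈ Set.Ioo 0 b) :
    IsGreatest
      {c : ℝ | ∃ v : Fin s → ℝ, (∀ j, |v j - β₀ j| ≤ ε) ∧
        c = |xs1 ⬝ᵥ ∑ j, (Real.sign (v j) * (a * (a + 1) / (a + |v j|) ^ 2)) • xcol j|}
      (|r| * Real.sqrt s * (a * (a + 1) / (a + b - ε) ^ 2)) := by
  obtain ⟨hr1, hr2⟩ := hr
  obtain ⟨hε0, hεb⟩ := hε
  have hsR : (0:ℝ) < (s:ℝ) := by exact_mod_cast hs
  have hs' : (0:ℝ) < Real.sqrt s := Real.sqrt_pos.2 hsR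
  have hss : Real.sqrt s * Real.sqrt s = (s:ℝ) := Real.mul_self_sqrt hsR.le
  have hdiv : (s:ℝ) / Real.sqrt s = Real.sqrt s := by
    rw [div_eq_iff hs'.ne']; exact hss.symm
  have hden : 0 < a + b - ε := by linarith
  set M : ℝ := a * (a + 1) / (a + b - ε) ^ 2 with hM
  have hMpos : 0 < M := by positivity
  -- sign facts
  have hsign : ∀ (v : Fin s → ℝ), (∀ j, |v j - β₀ j| ≤ ε) → ∀ j,
      Real.sign (v j) = Real.sign (β₀ j) ∧ b - ε ≤ |v j| := by
    intro v hv j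
    have hbj := hβ j
    have h1 := (abs_le.1 (hv j)).1
    have h2 := (abs_le.1 (hv j)).2
    rcases abs_cases (β₀ j) with ⟨e1, _⟩ | ⟨e1, _⟩
    · have hvj : b - ε ≤ v j := by linarith
      refine ⟨?_, ?_⟩
      · rw [Real.sign_of_pos (by linarith), Real.sign_of_pos (by linarith)]
      · rw [abs_of_pos (by linarith)]; exact hvj
    · have hvj : v j ≤ -(b - ε) := by linarith
      refine ⟨?_, ?_⟩
      · rw [Real.sign_of_neg (by linarith), Real.sign_of_neg (by linarith)]
      · rw [abs_of_neg (by linarith)]; linarith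
  have hsgnsq : ∀ j, Real.sign (β₀ j) * Real.sign (β₀ j) = 1 := by
    intro j
    have hbj := hβ j
    rcases abs_cases (β₀ j) with ⟨e1, _⟩ | ⟨e1, _⟩
    · rw [Real.sign_of_pos (by linarith)]; ring
    · rw [Real.sign_of_neg (by linarith)]; ring
  -- key computation of the dot product
  have hdot : ∀ (v : Fin s → ℝ), (∀ j, |v j - β₀ j| ≤ ε) →
      xs1 ⬝ᵥ ∑ j, (Real.sign (v j) * (a * (a + 1) / (a + |v j|) ^ 2)) • xcol j
        = (r / Real.sqrt s) * ∑ j, a * (a + 1) / (a + |v j|) ^ 2 := by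
    intro v hv
    subst hx
    rw [add_dotProduct]
    have hzero : h ⬝ᵥ ∑ j, (Real.sign (v j) * (a * (a + 1) / (a + |v j|) ^ 2)) • xcol j = 0 := by
      rw [stmt12_dot_sum]
      simp [hherp]
    rw [hzero, add_zero, smul_dotProduct, stmt12_sum_dot]
    have hcolS : ∀ k : Fin s,
        xcol k ⬝ᵥ (∑ j, (Real.sign (v j) * (a * (a + 1) / (a + |v j|) ^ 2)) • xcol j)
          = Real.sign (v k) * (a * (a + 1) / (a + |v k|) ^ 2) := by
      intro k
      rw [stmt12_dot_sum]
      simp [horth, mul_ite, Finset.sum_ite_eq]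
    have : ∑ k, Real.sign (β₀ k) *
        (xcol k ⬝ᵥ ∑ j, (Real.sign (v j) * (a * (a + 1) / (a + |v j|) ^ 2)) • xcol j)
        = ∑ k, a * (a + 1) / (a + |v k|) ^ 2 := by
      refine Finset.sum_congr rfl fun k _ => ?_
      rw [hcolS k, (hsign v hv k).1, ← mul_assoc, hsgnsq k, one_mul]
    rw [this, smul_eq_mul]
  have hwit_con : ∀ j, |(β₀ j - ε * Real.sign (β₀ j)) - β₀ j| ≤ ε := by
    intro j
    have hbj := hβ j
    rcases abs_cases (β₀ j) with ⟨e1, _⟩ | ⟨e1, _⟩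
    · rw [Real.sign_of_pos (by linarith)]
      simp [abs_of_nonneg hε0.le]
    · rw [Real.sign_of_neg (by linarith)]
      simp [abs_of_nonneg hε0.le]
  have hwit_abs : ∀ j, |β₀ j - ε * Real.sign (β₀ j)| = b - ε := by
    intro j
    have hbj := hβ j
    rcases abs_cases (β₀ j) with ⟨e1, _⟩ | ⟨e1, _⟩
    · rw [Real.sign_of_pos (by linarith), mul_one, abs_of_pos (by linarith)]
      linarith
    · rw [Real.sign_of_neg (by linarith), abs_of_neg (by linarith)]
      linarith
  constructor
  · -- membership: witness
    refine ⟨fun j => β₀ j - ε * Real.sign (β₀ j), fun j => hwit_con j, ?_⟩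
    rw [hdot _ (fun j => hwit_con j)]
    have hsum : ∑ j : Fin s, a * (a + 1) / (a + |β₀ j - ε * Real.sign (β₀ j)|) ^ 2
        = (s:ℝ) * M := by
      rw [Finset.sum_congr rfl fun j _ => by rw [hwit_abs j]]
      rw [Finset.sum_const, Finset.card_univ, Fintype.card_fin, nsmul_eq_mul, hM]
      ring_nf
    rw [hsum, abs_mul, abs_div, abs_of_pos hs',
      abs_of_nonneg (by positivity : (0:ℝ) ≤ (s:ℝ) * M)]
    symm
    calc |r| / Real.sqrt s * ((s:ℝ) * M) = |r| * ((s:ℝ) / Real.sqrt s) * M := by ring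
      _ = |r| * Real.sqrt s * M := by rw [hdiv]
  · -- upper bound
    rintro c ⟨v, hv, rfl⟩
    rw [hdot v hv]
    have hM_j : ∀ j, a * (a + 1) / (a + |v j|) ^ 2 ≤ M := by
      intro j
      have h2 : (a + b - ε) ^ 2 ≤ (a + |v j|) ^ 2 := by
        nlinarith [(hsign v hv j).2]
      exact div_le_div_of_nonneg_left (by positivity) (by positivity) h2
    have hsumnn : 0 ≤ ∑ j, a * (a + 1) / (a + |v j|) ^ 2 :=
      Finset.sum_nonneg fun j _ => by positivity
    have hsum : ∑ j, a * (a + 1) / (a + |v j|) ^ 2 ≤ (s:ℝ) * M := by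
      calc ∑ j, a * (a + 1) / (a + |v j|) ^ 2 ≤ ∑ _j : Fin s, M :=
            Finset.sum_le_sum fun j _ => hM_j j
        _ = (s:ℝ) * M := by
            rw [Finset.sum_const, Finset.card_univ, Fintype.card_fin, nsmul_eq_mul]
    rw [abs_mul, abs_div, abs_of_pos hs', abs_of_nonneg hsumnn]
    have h1 : |r| / Real.sqrt s * ∑ j, a * (a + 1) / (a + |v j|) ^ 2
        ≤ |r| / Real.sqrt s * ((s:ℝ) * M) :=
      mul_le_mul_of_nonneg_left hsum (by positivity)
    refine h1.trans (le_of_eq ?_)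
    calc |r| / Real.sqrt s * ((s:ℝ) * M) = |r| * ((s:ℝ) / Real.sqrt s) * M := by ring
      _ = |r| * Real.sqrt s * M := by rw [hdiv]
end

section
/- β₀ is a fixed point of the reweighted-L2 functional: β₀ is the unique minimizer of β ↦ Σ_{j : β₀,ⱼ≠0} βⱼ²/dⱼ over {β ∈ ℝᵖ : Xβ = y, β_j = 0 for all j with β₀,ⱼ = 0 allowed only implicitly via infinite weight}, where dⱼ = (a+1)⁻¹|β₀,ⱼ|(a + |β₀,ⱼ|) and the weight for β₀,ⱼ = 0 is +∞ (forcing βⱼ = 0). In particular F(β₀) = β₀ for the map F(γ) = argmin_{β : Xβ=y} βᵀΓ(γ)β. -/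
open Matrix
open scoped ENNReal

/-- `β₀` is the unique minimizer of the reweighted-L2 objective
`β ↦ Σ_{j : β₀ⱼ ≠ 0} βⱼ²/dⱼ` (with `dⱼ = (a+1)⁻¹|β₀ⱼ|(a+|β₀ⱼ|)` and infinite weight,
forcing `βⱼ = 0`, when `β₀ⱼ = 0`) over `{β : Xβ = y}`; in particular `F(β₀) = β₀` for
the SIRS map `F(γ) = argmin_{Xβ=y} βᵀΓ(γ)β`.  Here the identifiability of `β₀`
(assumed throughout the paper) is included as a hypothesis. -/
theorem stmt_14 {n p : ℕ} (X : Matrix (Fin n) (Fin p) ℝ) (y : Fin n → ℝ)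
    (a : ℝ) (ha : 0 < a) (β₀ : Fin p → ℝ) (hy : X.mulVec β₀ = y)
    (hident : ∀ β : Fin p → ℝ, X.mulVec β = X.mulVec β₀ →
      β = β₀ ∨ (Function.support β₀).ncard < (Function.support β).ncard) :
    ∀ β : Fin p → ℝ, X.mulVec β = y → β ≠ β₀ →
      (∑ j, if β₀ j = 0 then 0
        else ENNReal.ofReal (β₀ j ^ 2 / ((a + 1)⁻¹ * |β₀ j| * (a + |β₀ j|)))) <
      ∑ j, if β₀ j = 0 then (if β j = 0 then 0 else (⊤ : ℝ≥0∞))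
        else ENNReal.ofReal (β j ^ 2 / ((a + 1)⁻¹ * |β₀ j| * (a + |β₀ j|))) := by
  intro β hβ hne
  rcases hident β (hβ.trans hy.symm) with h | h
  · exact absurd h hne
  have hns : ¬ Function.support β ⊆ Function.support β₀ := by
    intro hsub
    have := Set.ncard_le_ncard hsub (Set.toFinite _)
    omega
  obtain ⟨j, hj, hj0⟩ := Set.not_subset.mp hns
  have hj0' : β₀ j = 0 := by simpa [Function.mem_support] using hj0
  have hjβ : β j ≠ 0 := hj
  have hRHS : (∑ j, if β₀ j = 0 then (if β j = 0 then 0 else (⊤ : ℝ≥0∞))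
      else ENNReal.ofReal (β j ^ 2 / ((a + 1)⁻¹ * |β₀ j| * (a + |β₀ j|)))) = ⊤ := by
    refine ENNReal.sum_eq_top.mpr ⟨j, Finset.mem_univ j, ?_⟩
    simp [hj0', hjβ]
  rw [hRHS]
  refine Ne.lt_top ?_
  refine (ENNReal.sum_lt_top.mpr ?_).ne
  intro i _
  split <;> simp [ENNReal.ofReal_lt_top]
end

section
/- (Identity for the SIRS update.) For any p×p diagonal positive semidefinite matrix D and any n×p matrix X and y ∈ ℝⁿ, DXᵀ(XDXᵀ)⁺y = D^{1/2}(D^{1/2}XᵀXD^{1/2})⁺D^{1/2}Xᵀy. -/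
open Matrix

/-- The four Penrose conditions characterizing the Moore–Penrose pseudoinverse. -/
def IsMoorePenrose {m n : Type*} [Fintype m] [Fintype n]
    (A : Matrix m n ℝ) (B : Matrix n m ℝ) : Prop :=
  A * B * A = A ∧ B * A * B = B ∧ (A * B)ᵀ = A * B ∧ (B * A)ᵀ = B * A

section Aux

variable {m n : Type*} [Fintype m] [Fintype n]

/-- Uniqueness of the Moore–Penrose pseudoinverse. -/
lemma mp_unique {A : Matrix m n ℝ} {B C : Matrix n m ℝ}
    (hB : IsMoorePenrose A B) (hC : IsMoorePenrose A C) : B = C := by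
  obtain ⟨hB1, hB2, hB3, hB4⟩ := hB
  obtain ⟨hC1, hC2, hC3, hC4⟩ := hC
  have hAt1 : Aᵀ = Aᵀ * (A * C) := by
    conv_lhs => rw [← hC1]
    rw [Matrix.transpose_mul, hC3]
  have hAt2 : Aᵀ = (B * A) * Aᵀ := by
    conv_lhs => rw [← hB1]
    rw [Matrix.transpose_mul, Matrix.transpose_mul, ← Matrix.mul_assoc,
      ← Matrix.transpose_mul, hB4]
  have e1 : B = B * A * C := by
    calc B = B * A * B := hB2.symm
      _ = B * (A * B)ᵀ := by rw [hB3, Matrix.mul_assoc]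
      _ = B * (Bᵀ * Aᵀ) := by rw [Matrix.transpose_mul]
      _ = B * (Bᵀ * (Aᵀ * (A * C))) := by rw [← hAt1]
      _ = (B * (Bᵀ * Aᵀ)) * (A * C) := by simp only [Matrix.mul_assoc]
      _ = (B * (A * B)ᵀ) * (A * C) := by rw [Matrix.transpose_mul]
      _ = (B * A * B) * (A * C) := by rw [hB3]; simp only [Matrix.mul_assoc]
      _ = B * (A * C) := by rw [hB2]
      _ = B * A * C := by rw [Matrix.mul_assoc]
  have e2 : C = B * A * C := by
    calc C = C * A * C := hC2.symm
      _ = (C * A)ᵀ * C := by rw [hC4]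
      _ = Aᵀ * Cᵀ * C := by rw [Matrix.transpose_mul]
      _ = ((B * A) * Aᵀ) * Cᵀ * C := by rw [← hAt2]
      _ = (B * A) * ((Aᵀ * Cᵀ) * C) := by simp only [Matrix.mul_assoc]
      _ = (B * A) * ((C * A)ᵀ * C) := by rw [Matrix.transpose_mul]
      _ = (B * A) * (C * A * C) := by rw [hC4]
      _ = B * A * C := by rw [hC2, Matrix.mul_assoc]
  rw [e1, ← e2]

/-- The Penrose conditions transpose. -/
lemma mp_transpose {A : Matrix m n ℝ} {P : Matrix n m ℝ}
    (h : IsMoorePenrose A P) : IsMoorePenrose Aᵀ Pᵀ := by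
  obtain ⟨h1, h2, h3, h4⟩ := h
  refine ⟨?_, ?_, ?_, ?_⟩
  · rw [← Matrix.transpose_mul, ← Matrix.transpose_mul, ← Matrix.mul_assoc, h1]
  · rw [← Matrix.transpose_mul, ← Matrix.transpose_mul, ← Matrix.mul_assoc, h2]
  · rw [← Matrix.transpose_mul, h4]; exact h4
  · rw [← Matrix.transpose_mul, h3]; exact h3

/-- Pseudoinverse of a symmetric matrix is symmetric. -/
lemma mp_symm {A P : Matrix m m ℝ} (hA : Aᵀ = A) (hP : IsMoorePenrose A P) :
    Pᵀ = P := by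
  have h := mp_transpose hP
  rw [hA] at h
  exact mp_unique h hP

lemma nn_zero {N : Matrix m n ℝ} (h : N * Nᵀ = 0) : N = 0 := by
  rw [← Matrix.conjTranspose_eq_transpose_of_trivial] at h
  exact Matrix.self_mul_conjTranspose_eq_zero.mp h

/-- `B Bᵀ (B Bᵀ)⁺ B = B`. -/
lemma gpb {B : Matrix m n ℝ} {P : Matrix m m ℝ}
    (hP : IsMoorePenrose (B * Bᵀ) P) : B * Bᵀ * P * B = B := by
  obtain ⟨h1, h2, h3, h4⟩ := hP
  set G := B * Bᵀ with hG
  have ht : (G * P * B)ᵀ = Bᵀ * (G * P) := by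
    rw [Matrix.transpose_mul, h3]
  have t1 : B * (Bᵀ * (G * P)) = G * (G * P) := by
    rw [← Matrix.mul_assoc, ← hG]
  have t2 : G * P * B * Bᵀ = G := by
    rw [Matrix.mul_assoc, ← hG, h1]
  have t3 : G * P * B * (Bᵀ * (G * P)) = G * (G * P) := by
    rw [← Matrix.mul_assoc, t2]
  have key : (B - G * P * B) * (B - G * P * B)ᵀ = 0 := by
    rw [Matrix.transpose_sub, ht, Matrix.sub_mul, Matrix.mul_sub, Matrix.mul_sub,
      t1, t2, t3, ← hG]
    abel
  have h0 : B - G * P * B = 0 := nn_zero key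
  have := sub_eq_zero.mp h0
  exact this.symm

/-- The key identity `Bᵀ (B Bᵀ)⁺ = (Bᵀ B)⁺ Bᵀ` (both equal `B⁺`). -/
lemma bp_key (B : Matrix m n ℝ) (P : Matrix m m ℝ) (Q : Matrix n n ℝ)
    (hP : IsMoorePenrose (B * Bᵀ) P) (hQ : IsMoorePenrose (Bᵀ * B) Q) :
    Bᵀ * P = Q * Bᵀ := by
  have hsym1 : (B * Bᵀ)ᵀ = B * Bᵀ := by
    rw [Matrix.transpose_mul, Matrix.transpose_transpose]
  have hsym2 : (Bᵀ * B)ᵀ = Bᵀ * B := by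
    rw [Matrix.transpose_mul, Matrix.transpose_transpose]
  have hPs : Pᵀ = P := mp_symm hsym1 hP
  have hQs : Qᵀ = Q := mp_symm hsym2 hQ
  have hGPB : B * Bᵀ * P * B = B := gpb hP
  have hGPB2 : Bᵀ * B * Q * Bᵀ = Bᵀ := by
    have h := gpb (B := Bᵀ) (P := Q) (by rw [Matrix.transpose_transpose]; exact hQ)
    rwa [Matrix.transpose_transpose] at h
  have hBQH : B * Q * (Bᵀ * B) = B := by
    have h := congrArg Matrix.transpose hGPB2
    rw [Matrix.transpose_mul, Matrix.transpose_mul, hsym2, hQs,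
      Matrix.transpose_transpose] at h
    rw [Matrix.mul_assoc]
    exact h
  obtain ⟨h11, h12, h13, h14⟩ := hP
  obtain ⟨h21, h22, h23, h24⟩ := hQ
  have mp1 : IsMoorePenrose B (Bᵀ * P) := by
    refine ⟨?_, ?_, ?_, ?_⟩
    · calc B * (Bᵀ * P) * B = B * Bᵀ * P * B := by simp only [Matrix.mul_assoc]
        _ = B := hGPB
    · calc (Bᵀ * P) * B * (Bᵀ * P) = Bᵀ * (P * (B * Bᵀ) * P) := by
            simp only [Matrix.mul_assoc]
        _ = Bᵀ * P := by rw [h12]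
    · rw [← Matrix.mul_assoc]
      exact h13
    · rw [Matrix.transpose_mul, Matrix.transpose_mul, Matrix.transpose_transpose, hPs,
        Matrix.mul_assoc]
  have mp2 : IsMoorePenrose B (Q * Bᵀ) := by
    refine ⟨?_, ?_, ?_, ?_⟩
    · calc B * (Q * Bᵀ) * B = B * Q * (Bᵀ * B) := by simp only [Matrix.mul_assoc]
        _ = B := hBQH
    · calc (Q * Bᵀ) * B * (Q * Bᵀ) = Q * (Bᵀ * B) * Q * Bᵀ := by
            simp only [Matrix.mul_assoc]
        _ = Q * Bᵀ := by rw [h22]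
    · rw [Matrix.transpose_mul, Matrix.transpose_mul, Matrix.transpose_transpose, hQs,
        Matrix.mul_assoc]
    · rw [Matrix.mul_assoc]
      exact h24
  exact mp_unique mp1 mp2

end Aux

/-- The identity underlying the SIRS update: for a diagonal positive-semidefinite `D`,
`DXᵀ(XDXᵀ)⁺y = D^{1/2}(D^{1/2}XᵀXD^{1/2})⁺D^{1/2}Xᵀy` for every `y ∈ ℝⁿ`. -/
theorem stmt_18 {n p : ℕ} (X : Matrix (Fin n) (Fin p) ℝ) (d : Fin p → ℝ)
    (hd : ∀ j, 0 ≤ d j)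
    (P1 : Matrix (Fin n) (Fin n) ℝ)
    (hP1 : IsMoorePenrose (X * Matrix.diagonal d * Xᵀ) P1)
    (P2 : Matrix (Fin p) (Fin p) ℝ)
    (hP2 : IsMoorePenrose (Matrix.diagonal (fun j => Real.sqrt (d j)) * Xᵀ * X *
      Matrix.diagonal (fun j => Real.sqrt (d j))) P2)
    (y : Fin n → ℝ) :
    (Matrix.diagonal d * Xᵀ * P1).mulVec y =
      (Matrix.diagonal (fun j => Real.sqrt (d j)) * P2 *
        Matrix.diagonal (fun j => Real.sqrt (d j)) * Xᵀ).mulVec y := by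
  set S : Matrix (Fin p) (Fin p) ℝ := Matrix.diagonal (fun j => Real.sqrt (d j)) with hS
  have hSt : Sᵀ = S := Matrix.diagonal_transpose _
  have hSS : S * S = Matrix.diagonal d := by
    rw [hS, Matrix.diagonal_mul_diagonal]
    exact congrArg Matrix.diagonal (funext fun j => Real.mul_self_sqrt (hd j))
  have hBt : (X * S)ᵀ = S * Xᵀ := by rw [Matrix.transpose_mul, hSt]
  have hBBt : (X * S) * (X * S)ᵀ = X * Matrix.diagonal d * Xᵀ := by
    rw [hBt, Matrix.mul_assoc, ← Matrix.mul_assoc S S, hSS, ← Matrix.mul_assoc]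
  have hBtB : (X * S)ᵀ * (X * S) = S * Xᵀ * X * S := by
    rw [hBt]
    simp only [Matrix.mul_assoc]
  have key : (X * S)ᵀ * P1 = P2 * (X * S)ᵀ := by
    refine bp_key (X * S) P1 P2 ?_ ?_
    · rw [hBBt]; exact hP1
    · rw [hBtB]; exact hP2
  rw [hBt] at key
  have key' : S * (Xᵀ * P1) = P2 * (S * Xᵀ) := by
    rw [← Matrix.mul_assoc]; exact key
  have hmat : Matrix.diagonal d * Xᵀ * P1 = S * P2 * S * Xᵀ := by
    calc Matrix.diagonal d * Xᵀ * P1 = S * S * Xᵀ * P1 := by rw [hSS]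
      _ = S * (S * (Xᵀ * P1)) := by simp only [Matrix.mul_assoc]
      _ = S * (P2 * (S * Xᵀ)) := by rw [key']
      _ = S * P2 * S * Xᵀ := by simp only [Matrix.mul_assoc]
  rw [hmat]
end
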